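/- Suppose 0 < ε ≤ 1/9 and 0 < θ ≤ 1/9, and X = (X_k, k ∈ ℤ) is a strictly stationary Markov chain satisfying Condition H(ε,θ). Then for every positive integer n, E(X_0·X_n) = Cov(X_0, X_n) = ε(1−θ)^n > 0. -/

import Mathlib

open MeasureTheory ProbabilityTheory Filter Topology

noncomputable section

/-- A sequence `X = (X_k, k ∈ ℤ)` of real random variables is strictly stationary if for
every `n ≥ 1` and `j ∈ ℤ`, `(X_1, …, X_n)` has the same distribution as
`(X_{1+j}, …, X_{n+j})`. -/
def IsStrictlyStationary {Ω : Type*} [MeasurableSpace Ω] (P : Measure Ω)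
    (X : ℤ → Ω → ℝ) : Prop :=
  ∀ (n : ℕ) (j : ℤ),
    Measure.map (fun ω => fun i : Fin n => X (1 + (i : ℤ)) ω) P =
    Measure.map (fun ω => fun i : Fin n => X (1 + j + (i : ℤ)) ω) P

/-- `X` is a Markov chain: for every `n ∈ ℤ` and Borel set `B`,
`P(X_{n+1} ∈ B | σ(X_k, k ≤ n)) = P(X_{n+1} ∈ B | X_n)` almost surely (expressed via
conditional expectations of indicator functions). -/
def IsMarkovChain {Ω : Type*} [MeasurableSpace Ω] (P : Measure Ω)
    (X : ℤ → Ω → ℝ) : Prop :=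
  ∀ (n : ℤ) (B : Set ℝ), MeasurableSet B →
    (P[(fun ω => Set.indicator B (fun _ => (1 : ℝ)) (X (n + 1) ω)) |
        ⨆ k : {k : ℤ // k ≤ n}, MeasurableSpace.comap (X k) inferInstance])
      =ᵐ[P]
    (P[(fun ω => Set.indicator B (fun _ => (1 : ℝ)) (X (n + 1) ω)) |
        MeasurableSpace.comap (X n) inferInstance])

/-- Condition `H(ε,θ)`: `X` is a strictly stationary Markov chain with state space
`{−1,0,1}`, marginal distribution `π^{(ε)}`, and one-step transition probabilities given
by the matrix `ℙ^{(ε,θ)}` (with `θ* := θ/(1−ε)`). Conditional probabilities are expressed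
via `ProbabilityTheory.cond`. -/
def CondH {Ω : Type*} [MeasurableSpace Ω] (P : Measure Ω) (X : ℤ → Ω → ℝ)
    (ε θ : ℝ) : Prop :=
  IsStrictlyStationary P X ∧ IsMarkovChain P X ∧
  (∀ k, Measurable (X k)) ∧
  (∀ k ω, X k ω ∈ ({-1, 0, 1} : Set ℝ)) ∧
  P {ω | X 0 ω = 0} = ENNReal.ofReal (1 - ε) ∧
  P {ω | X 0 ω = -1} = ENNReal.ofReal (ε / 2) ∧
  P {ω | X 0 ω = 1} = ENNReal.ofReal (ε / 2) ∧
  ProbabilityTheory.cond P {ω | X 0 ω = 0} {ω | X 1 ω = 0}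
      = ENNReal.ofReal (1 - (θ / (1 - ε)) * ε) ∧
  ProbabilityTheory.cond P {ω | X 0 ω = 0} {ω | X 1 ω = -1}
      = ENNReal.ofReal ((θ / (1 - ε)) * ε / 2) ∧
  ProbabilityTheory.cond P {ω | X 0 ω = 0} {ω | X 1 ω = 1}
      = ENNReal.ofReal ((θ / (1 - ε)) * ε / 2) ∧
  ProbabilityTheory.cond P {ω | X 0 ω = -1} {ω | X 1 ω = -1}
      = ENNReal.ofReal (1 - θ) ∧
  ProbabilityTheory.cond P {ω | X 0 ω = 1} {ω | X 1 ω = 1}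
      = ENNReal.ofReal (1 - θ) ∧
  ProbabilityTheory.cond P {ω | X 0 ω = -1} {ω | X 1 ω = 0}
      = ENNReal.ofReal θ ∧
  ProbabilityTheory.cond P {ω | X 0 ω = 1} {ω | X 1 ω = 0}
      = ENNReal.ofReal θ ∧
  ProbabilityTheory.cond P {ω | X 0 ω = -1} {ω | X 1 ω = 1} = 0 ∧
  ProbabilityTheory.cond P {ω | X 0 ω = 1} {ω | X 1 ω = -1} = 0

/-! Since the chain passes between `1` and `-1` only through `0`, and leaves `0` for `1` or `-1`
with equal probability, `E(X_{n+1} | X_n) = (1 - θ) X_n`. By the Markov property this is also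
`E(X_{n+1} | X_k, k ≤ n)`, so conditioning on the past gives
`E(X_0 X_{n+1}) = (1 - θ) E(X_0 X_n)`; together with `E(X_0²) = ε` and `E(X_0) = 0` this is the
claim. -/

section FiniteRange

variable {Ω β : Type*} [MeasurableSpace Ω] [MeasurableSpace β] {μ : Measure Ω} {Y : Ω → β}
  {S : Finset β}

theorem integrable_comp_of_forall_mem_finset [IsFiniteMeasure μ] (hY : Measurable Y)
    (hYS : ∀ ω, Y ω ∈ S) {φ : β → ℝ} (hφ : Measurable φ) :
    Integrable (fun ω => φ (Y ω)) μ :=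
  .of_bound (hφ.comp hY).aestronglyMeasurable (∑ a ∈ S, ‖φ a‖) <| ae_of_all _ fun ω =>
    Finset.single_le_sum (f := fun a => ‖φ a‖) (fun _ _ => norm_nonneg _) (hYS ω)

variable [MeasurableSingletonClass β]

theorem integral_eq_sum_setIntegral_preimage_singleton {E : Type*} [NormedAddCommGroup E]
    [NormedSpace ℝ E] (hY : Measurable Y) (hYS : ∀ ω, Y ω ∈ S) {f : Ω → E}
    (hf : Integrable f μ) :
    ∫ ω, f ω ∂μ = ∑ a ∈ S, ∫ ω in Y ⁻¹' {a}, f ω ∂μ := by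
  have hcover : ⋃ a ∈ S, Y ⁻¹' {a} = Set.univ :=
    Set.eq_univ_of_forall fun ω => Set.mem_biUnion (hYS ω) rfl
  rw [← integral_biUnion_finset S (fun a _ => hY (measurableSet_singleton a))
    (fun a _ b _ hab => (Set.disjoint_singleton.mpr hab).preimage Y) fun a _ => hf.integrableOn,
    hcover, setIntegral_univ]

theorem integral_comp_eq_sum_measureReal [IsFiniteMeasure μ] (hY : Measurable Y)
    (hYS : ∀ ω, Y ω ∈ S) {φ : β → ℝ} (hφ : Measurable φ) :
    ∫ ω, φ (Y ω) ∂μ = ∑ a ∈ S, φ a * μ.real (Y ⁻¹' {a}) := by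
  rw [integral_eq_sum_setIntegral_preimage_singleton hY hYS
    (integrable_comp_of_forall_mem_finset hY hYS hφ)]
  refine Finset.sum_congr rfl fun a _ => ?_
  rw [setIntegral_congr_fun (hY (measurableSet_singleton a)) fun ω (hω : Y ω = a) => by rw [hω],
    setIntegral_const, smul_eq_mul, mul_comm]

theorem condExp_comap_eq_of_setIntegral_preimage_singleton [IsFiniteMeasure μ]
    (hY : Measurable Y) (hYS : ∀ ω, Y ω ∈ S) {f : Ω → ℝ} (hf : Integrable f μ) {φ : β → ℝ}
    (hφ : Measurable φ)
    (hfiber : ∀ a ∈ S, ∫ ω in Y ⁻¹' {a}, f ω ∂μ = ∫ ω in Y ⁻¹' {a}, φ (Y ω) ∂μ) :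
    μ[f | MeasurableSpace.comap Y inferInstance] =ᵐ[μ] fun ω => φ (Y ω) := by
  have hφY := integrable_comp_of_forall_mem_finset (μ := μ) hY hYS hφ
  refine (ae_eq_condExp_of_forall_setIntegral_eq hY.comap_le hf (fun _ _ _ => hφY.integrableOn)
    ?_ (hφ.comp (Measurable.of_comap_le le_rfl)).aestronglyMeasurable).symm
  rintro _ ⟨B, hB, rfl⟩ -
  rw [integral_eq_sum_setIntegral_preimage_singleton hY hYS hφY.restrict,
    integral_eq_sum_setIntegral_preimage_singleton hY hYS hf.restrict]
  refine Finset.sum_congr rfl fun a ha => ?_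
  rw [Measure.restrict_restrict (hY (measurableSet_singleton a))]
  by_cases haB : a ∈ B
  · rw [Set.inter_eq_left.mpr (Set.preimage_mono (Set.singleton_subset_iff.mpr haB)),
      hfiber a ha]
  · rw [← Set.preimage_inter, Set.singleton_inter_eq_empty.mpr haB, Set.preimage_empty,
      Measure.restrict_empty, integral_zero_measure, integral_zero_measure]

end FiniteRange

theorem integral_mul_condExp {Ω : Type*} {m m₀ : MeasurableSpace Ω} {μ : Measure[m₀] Ω}
    (hm : m ≤ m₀) [SigmaFinite (μ.trim hm)] {f g : Ω → ℝ} (hf : StronglyMeasurable[m] f)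
    (hfg : Integrable (f * g) μ) (hg : Integrable g μ) :
    ∫ ω, f ω * (μ[g | m]) ω ∂μ = ∫ ω, f ω * g ω ∂μ := by
  calc ∫ ω, f ω * (μ[g | m]) ω ∂μ = ∫ ω, (μ[f * g | m]) ω ∂μ :=
        integral_congr_ae (condExp_mul_of_stronglyMeasurable_left hf hfg hg).symm
    _ = ∫ ω, f ω * g ω ∂μ := integral_condExp hm

namespace IsStrictlyStationary

variable {Ω : Type*} [MeasurableSpace Ω] {P : Measure Ω} {X : ℤ → Ω → ℝ}

theorem map_pair (hX : IsStrictlyStationary P X) (hmeas : ∀ k, Measurable (X k)) (n : ℤ) :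
    P.map (fun ω => (X n ω, X (n + 1) ω)) = P.map (fun ω => (X 0 ω, X 1 ω)) := by
  have hcomp : ∀ j : ℤ, P.map (fun ω => (X (1 + j) ω, X (1 + j + 1) ω))
      = (P.map fun ω (i : Fin 2) => X (1 + j + i) ω).map fun v => (v 0, v 1) := by
    intro j
    rw [Measure.map_map (by fun_prop) (measurable_pi_lambda _ fun i => hmeas _)]
    congr
    funext ω
    simp
  have hshift : ∀ j j' : ℤ, P.map (fun ω => (X (1 + j) ω, X (1 + j + 1) ω))
      = P.map (fun ω => (X (1 + j') ω, X (1 + j' + 1) ω)) := by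
    intro j j'
    rw [hcomp, hcomp, ← hX, ← hX]
  simpa only [add_sub_cancel, add_neg_cancel, zero_add] using hshift (n - 1) (-1)

theorem setIntegral_comp_pair (hX : IsStrictlyStationary P X) (hmeas : ∀ k, Measurable (X k))
    (n : ℤ) (a : ℝ) {φ : ℝ × ℝ → ℝ} (hφ : Measurable φ) :
    ∫ ω in X n ⁻¹' {a}, φ (X n ω, X (n + 1) ω) ∂P
      = ∫ ω in X 0 ⁻¹' {a}, φ (X 0 ω, X 1 ω) ∂P := by
  have hψ : Measurable ((Prod.fst ⁻¹' {a}).indicator φ) :=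
    hφ.indicator (measurable_fst (measurableSet_singleton a))
  have hlaw : ∀ k : ℤ, ∫ ω in X k ⁻¹' {a}, φ (X k ω, X (k + 1) ω) ∂P
      = ∫ p, (Prod.fst ⁻¹' {a}).indicator φ p ∂(P.map fun ω => (X k ω, X (k + 1) ω)) := by
    intro k
    rw [integral_map (by fun_prop) hψ.aestronglyMeasurable,
      ← integral_indicator (hmeas k (measurableSet_singleton a))]
    rfl
  simpa [hlaw, hX.map_pair hmeas n] using (hlaw 0).symm

end IsStrictlyStationary

abbrev pastMeasurableSpace {Ω : Type*} (X : ℤ → Ω → ℝ) (n : ℤ) : MeasurableSpace Ω :=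
  ⨆ k : {k : ℤ // k ≤ n}, MeasurableSpace.comap (X k) inferInstance

theorem IsMarkovChain.condExp_eq_condExp_comap {Ω : Type*} [MeasurableSpace Ω] {P : Measure Ω}
    [IsFiniteMeasure P] {X : ℤ → Ω → ℝ} (hM : IsMarkovChain P X) (n : ℤ)
    (hmeas : Measurable (X (n + 1))) (hS : ∀ ω, X (n + 1) ω ∈ ({-1, 0, 1} : Finset ℝ)) :
    P[X (n + 1) | pastMeasurableSpace X n]
      =ᵐ[P] P[X (n + 1) | MeasurableSpace.comap (X n) inferInstance] := by
  set e : ℝ → Ω → ℝ := fun b ω => Set.indicator {b} (fun _ => (1 : ℝ)) (X (n + 1) ω)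
  have he : ∀ b, Integrable (e b) P := fun b =>
    integrable_comp_of_forall_mem_finset hmeas hS
      (measurable_const.indicator (measurableSet_singleton b))
  -- the Markov property is only stated for indicators, so write `X (n + 1)` through them
  have hdecomp : X (n + 1) = e 1 - e (-1) := by
    funext ω
    have h := hS ω
    simp only [Finset.mem_insert, Finset.mem_singleton] at h
    rcases h with h | h | h <;> norm_num [e, h]
  rw [hdecomp]
  filter_upwards [condExp_sub (he 1) (he (-1)) (pastMeasurableSpace X n),
    condExp_sub (he 1) (he (-1)) (MeasurableSpace.comap (X n) inferInstance),
    hM n {1} (measurableSet_singleton 1), hM n {-1} (measurableSet_singleton (-1))]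
    with ω h₁ h₂ h₃ h₄
  rw [h₁, h₂, Pi.sub_apply, Pi.sub_apply]
  exact congrArg₂ (· - ·) h₃ h₄

namespace CondH

variable {Ω : Type*} [MeasurableSpace Ω] {P : Measure Ω} {X : ℤ → Ω → ℝ} {ε θ : ℝ}

theorem measurable (hX : CondH P X ε θ) (k : ℤ) : Measurable (X k) :=
  hX.2.2.1 k

theorem mem_states (hX : CondH P X ε θ) (k : ℤ) (ω : Ω) :
    X k ω ∈ ({-1, 0, 1} : Finset ℝ) := by
  simpa using hX.2.2.2.1 k ω

variable [IsProbabilityMeasure P]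

theorem integrable_mul (hX : CondH P X ε θ) (j k : ℤ) :
    Integrable (fun ω => X j ω * X k ω) P := by
  refine (integrable_comp_of_forall_mem_finset (hX.measurable k) (hX.mem_states k)
    measurable_id).bdd_mul (c := 1) (hX.measurable j).aestronglyMeasurable
    (ae_of_all _ fun ω => ?_)
  have h := hX.mem_states j ω
  simp only [Finset.mem_insert, Finset.mem_singleton] at h
  rcases h with h | h | h <;> norm_num [h]

theorem integral_eq_zero (hX : CondH P X ε θ) : ∫ ω, X 0 ω ∂P = 0 := by
  refine (integral_comp_eq_sum_measureReal (φ := fun x => x) (hX.measurable 0)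
    (hX.mem_states 0) measurable_id).trans ?_
  obtain ⟨-, -, -, -, -, hm, hp, -⟩ := hX
  rw [Finset.sum_insert (by norm_num), Finset.sum_insert (by norm_num), Finset.sum_singleton]
  simp [measureReal_def, Set.preimage, hm, hp]

theorem integral_mul_self_eq (hX : CondH P X ε θ) (hε : 0 ≤ ε) :
    ∫ ω, X 0 ω * X 0 ω ∂P = ε := by
  refine (integral_comp_eq_sum_measureReal (φ := fun x => x * x) (hX.measurable 0)
    (hX.mem_states 0) (by fun_prop)).trans ?_
  obtain ⟨-, -, -, -, -, hm, hp, -⟩ := hX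
  rw [Finset.sum_insert (by norm_num), Finset.sum_insert (by norm_num), Finset.sum_singleton]
  simp only [measureReal_def, Set.preimage, Set.mem_singleton_iff, hm, hp,
    ENNReal.toReal_ofReal (div_nonneg hε zero_le_two)]
  ring

theorem setIntegral_preimage_zero_succ (hX : CondH P X ε θ) (hθ : θ ≤ 1) {a : ℝ}
    (ha : a ∈ ({-1, 0, 1} : Finset ℝ)) :
    ∫ ω in X 0 ⁻¹' {a}, X 1 ω ∂P = (1 - θ) * ∫ ω in X 0 ⁻¹' {a}, X 0 ω ∂P := by
  have hA : MeasurableSet (X 0 ⁻¹' {a}) := hX.measurable 0 (measurableSet_singleton a)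
  have hjoint : ∀ b, (P.restrict (X 0 ⁻¹' {a})).real (X 1 ⁻¹' {b})
      = (P[X 1 ⁻¹' {b} | X 0 ⁻¹' {a}]).toReal * P.real (X 0 ⁻¹' {a}) := fun b => by
    rw [measureReal_restrict_apply (hX.measurable 1 (measurableSet_singleton b)),
      Set.inter_comm, measureReal_def, ← cond_mul_eq_inter hA, ENNReal.toReal_mul,
      measureReal_def]
  have hlhs : ∫ ω in X 0 ⁻¹' {a}, X 1 ω ∂P
      = ((P[X 1 ⁻¹' {1} | X 0 ⁻¹' {a}]).toReal - (P[X 1 ⁻¹' {-1} | X 0 ⁻¹' {a}]).toReal)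
        * P.real (X 0 ⁻¹' {a}) := by
    refine (integral_comp_eq_sum_measureReal (φ := fun x => x) (hX.measurable 1)
      (hX.mem_states 1) measurable_id).trans ?_
    rw [Finset.sum_insert (by norm_num), Finset.sum_insert (by norm_num), Finset.sum_singleton]
    simp only [hjoint]
    ring
  have hrhs : ∫ ω in X 0 ⁻¹' {a}, X 0 ω ∂P = a * P.real (X 0 ⁻¹' {a}) := by
    rw [setIntegral_congr_fun hA fun ω (hω : X 0 ω = a) => hω, setIntegral_const, smul_eq_mul,
      mul_comm]
  rw [hlhs, hrhs]
  obtain ⟨-, -, -, -, -, -, -, -, hc0m, hc0p, hcmm, hcpp, -, -, hcmp, hcpm⟩ := hX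
  simp only [Set.preimage, Set.mem_singleton_iff]
  simp only [Finset.mem_insert, Finset.mem_singleton] at ha
  rcases ha with rfl | rfl | rfl
  · rw [hcmp, hcmm, ENNReal.toReal_ofReal (sub_nonneg.mpr hθ), ENNReal.toReal_zero]
    ring
  · rw [hc0p, hc0m]
    ring
  · rw [hcpp, hcpm, ENNReal.toReal_ofReal (sub_nonneg.mpr hθ), ENNReal.toReal_zero]
    ring

theorem condExp_comap_eq (hX : CondH P X ε θ) (hθ : θ ≤ 1) (n : ℤ) :
    P[X (n + 1) | MeasurableSpace.comap (X n) inferInstance] =ᵐ[P] fun ω => (1 - θ) * X n ω := by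
  refine condExp_comap_eq_of_setIntegral_preimage_singleton (hX.measurable n) (hX.mem_states n)
    (integrable_comp_of_forall_mem_finset (hX.measurable (n + 1)) (hX.mem_states (n + 1))
      measurable_id) (measurable_const_mul (1 - θ)) fun a ha => ?_
  have hstat := hX.1
  calc ∫ ω in X n ⁻¹' {a}, X (n + 1) ω ∂P = ∫ ω in X 0 ⁻¹' {a}, X 1 ω ∂P :=
        hstat.setIntegral_comp_pair hX.measurable n a measurable_snd
    _ = (1 - θ) * ∫ ω in X 0 ⁻¹' {a}, X 0 ω ∂P := hX.setIntegral_preimage_zero_succ hθ ha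
    _ = ∫ ω in X 0 ⁻¹' {a}, (1 - θ) * X 0 ω ∂P := (integral_const_mul _ _).symm
    _ = ∫ ω in X n ⁻¹' {a}, (1 - θ) * X n ω ∂P :=
        (hstat.setIntegral_comp_pair hX.measurable n a (measurable_fst.const_mul _)).symm

theorem integral_mul_succ (hX : CondH P X ε θ) (hθ : θ ≤ 1) {n : ℤ} (hn : 0 ≤ n) :
    ∫ ω, X 0 ω * X (n + 1) ω ∂P = (1 - θ) * ∫ ω, X 0 ω * X n ω ∂P := by
  have hpast : pastMeasurableSpace X n ≤ ‹MeasurableSpace Ω› :=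
    iSup_le fun k => (hX.measurable k).comap_le
  have hX₀ : StronglyMeasurable[pastMeasurableSpace X n] (X 0) :=
    (Measurable.of_comap_le (le_iSup_of_le (⟨0, hn⟩ : {k : ℤ // k ≤ n}) le_rfl)).stronglyMeasurable
  have hmarkov := hX.2.1.condExp_eq_condExp_comap n (hX.measurable (n + 1))
    (hX.mem_states (n + 1))
  calc ∫ ω, X 0 ω * X (n + 1) ω ∂P
        = ∫ ω, X 0 ω * (P[X (n + 1) | pastMeasurableSpace X n]) ω ∂P :=
        (integral_mul_condExp hpast hX₀ (hX.integrable_mul 0 (n + 1))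
          (integrable_comp_of_forall_mem_finset (hX.measurable (n + 1))
            (hX.mem_states (n + 1)) measurable_id)).symm
    _ = ∫ ω, X 0 ω * ((1 - θ) * X n ω) ∂P := by
        refine integral_congr_ae ?_
        filter_upwards [hmarkov, hX.condExp_comap_eq hθ n] with ω h₁ h₂
        rw [h₁, h₂]
    _ = (1 - θ) * ∫ ω, X 0 ω * X n ω ∂P := by
        rw [← integral_const_mul]
        simp only [mul_left_comm]

end CondH

/-- Lemma 5.3(8a) of the paper: under Condition `H(ε,θ)`, for every `n ≥ 1`,
`E(X_0 X_n) = Cov(X_0, X_n) = ε(1−θ)^n > 0`. -/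
theorem stmt9 {Ω : Type*} [MeasurableSpace Ω] (P : Measure Ω) [IsProbabilityMeasure P]
    (ε θ : ℝ) (hε : 0 < ε ∧ ε ≤ 1 / 9) (hθ : 0 < θ ∧ θ ≤ 1 / 9)
    (X : ℤ → Ω → ℝ) (hX : CondH P X ε θ) :
    ∀ n : ℕ, 0 < n →
      (∫ ω, X 0 ω * X (n : ℤ) ω ∂P) = ε * (1 - θ) ^ n ∧
      (∫ ω, X 0 ω * X (n : ℤ) ω ∂P)
          - (∫ ω, X 0 ω ∂P) * (∫ ω, X (n : ℤ) ω ∂P) = ε * (1 - θ) ^ n ∧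
      0 < ε * (1 - θ) ^ n := by
  have hθ₁ : θ ≤ 1 := by linarith
  have hcorr : ∀ m : ℕ, ∫ ω, X 0 ω * X (m : ℤ) ω ∂P = ε * (1 - θ) ^ m := by
    intro m
    induction m with
    | zero => simpa using hX.integral_mul_self_eq hε.1.le
    | succ m ih =>
      rw [Nat.cast_succ, hX.integral_mul_succ hθ₁ (Int.natCast_nonneg m), ih]
      ring
  intro n _
  refine ⟨hcorr n, by rw [hX.integral_eq_zero, zero_mul, sub_zero, hcorr n], ?_⟩
  exact mul_pos hε.1 (pow_pos (by linarith) n)
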